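/- arXiv:2504.21796 — 2 statements merged into one kernel-verified Lean document; each statement's English description precedes it below -/
import Mathlib

section
/- (Geometric decay lemma.) Let {β_n}_{n∈ℤ}, {j_n}_{n∈ℤ}, δ, δ', δ'' be as in the unfolding lemma (nonnegative sequences, δ,δ',δ'' ∈ [0,1], δ+δ' ≤ 1, and β_{n+1} ≤ j_{n+1} + δβ_n + (1−δ−δ')β_{n−1} + δ''(β_{n−2}+β_{n−3}+β_{n−4}) for all n), and let {b_k}_{k≥0} be defined by b_0 := δ, c_0 := 1−δ−δ', d_0 = e_0 = f_0 := δ'', and b_{k+1} := b_kδ + c_k, c_{k+1} := b_k(1−δ−δ') + d_k, d_{k+1} := b_kδ'' + e_k, e_{k+1} := b_kδ'' + f_k, f_{k+1} := b_kδ''. Suppose there exist b⋆ > 0 and θ ∈ (0,1) such that: (a) 4θδ' < 1; (b) 14δ'' ≤ (1−θ)δ'; and (c) b_k ≤ b⋆(1 − 2θδ')^k for k = 0,1,2,3,4. Then b_k ≤ b⋆(1 − θδ'/2)^k for all integers k ≥ 0. -/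
/-!
The coefficients `b_k` obey the five-term linear recurrence
`b_{k+5} = δ b_{k+4} + (1-δ-δ') b_{k+3} + δ'' (b_{k+2} + b_{k+1} + b_k)` with nonnegative
coefficients, so a geometric bound `C ρ^k` on five consecutive terms propagates to all later
terms as soon as `ρ` satisfies the characteristic inequality
`δ ρ^4 + (1-δ-δ') ρ^3 + δ'' (ρ^2 + ρ + 1) ≤ ρ^5`. For `ρ = 1 - θδ'/2` this inequality holds
because `ρ^5 - δ ρ^4 - (1-δ-δ') ρ^3 ≥ ρ^3 (1-θ) δ'`, which dominates the `δ''` terms by (b);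
the initial bounds (c) give the first five terms since `1 - 2θδ' ≤ ρ`.
-/

open Finset

theorem le_geometric_of_le_linear_recurrence {N : ℕ} (a : Fin N → ℝ) (ha : ∀ i, 0 ≤ a i)
    {u : ℕ → ℝ} (hu : ∀ k, u (k + N) ≤ ∑ i, a i * u (k + i)) {C ρ : ℝ} (hC : 0 ≤ C)
    (hρ : 0 ≤ ρ) (hchar : ∑ i, a i * ρ ^ (i : ℕ) ≤ ρ ^ N)
    (hinit : ∀ k < N, u k ≤ C * ρ ^ k) (k : ℕ) : u k ≤ C * ρ ^ k := by
  induction k using Nat.strong_induction_on with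
  | _ k ih =>
    obtain hk | ⟨m, rfl⟩ : k < N ∨ ∃ m, k = m + N :=
      (lt_or_ge k N).imp_right fun h => ⟨k - N, by omega⟩
    · exact hinit k hk
    calc u (m + N) ≤ ∑ i, a i * u (m + i) := hu m
      _ ≤ ∑ i, a i * (C * ρ ^ (m + i)) := by
          gcongr with i
          · exact ha i
          · exact ih _ (by omega)
      _ = C * ρ ^ m * ∑ i, a i * ρ ^ (i : ℕ) := by
          rw [mul_sum]; congr 1 with i; ring
      _ ≤ C * ρ ^ m * ρ ^ N := by gcongr
      _ = C * ρ ^ (m + N) := by ring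

theorem add_five_eq_of_recursions {δ δ' δ'' : ℝ} {b c d e f : ℕ → ℝ}
    (hbS : ∀ k, b (k + 1) = b k * δ + c k)
    (hcS : ∀ k, c (k + 1) = b k * (1 - δ - δ') + d k)
    (hdS : ∀ k, d (k + 1) = b k * δ'' + e k)
    (heS : ∀ k, e (k + 1) = b k * δ'' + f k)
    (hfS : ∀ k, f (k + 1) = b k * δ'') (k : ℕ) :
    b (k + 5) = δ'' * b k + δ'' * b (k + 1) + δ'' * b (k + 2)
      + (1 - δ - δ') * b (k + 3) + δ * b (k + 4) := by
  rw [hbS, hcS, hdS, heS, hfS]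
  ring

theorem char_ineq_of_decay_conditions {δ δ' δ'' θ : ℝ} (hδ : 0 ≤ δ) (hδ' : 0 ≤ δ') (hδ'' : 0 ≤ δ'')
    (hθ : 0 < θ) (ha : 4 * θ * δ' < 1) (hbb : 14 * δ'' ≤ (1 - θ) * δ') :
    δ * (1 - θ * δ' / 2) ^ 4 + (1 - δ - δ') * (1 - θ * δ' / 2) ^ 3
      + δ'' * ((1 - θ * δ' / 2) ^ 2 + (1 - θ * δ' / 2) + 1) ≤ (1 - θ * δ' / 2) ^ 5 := by
  set ρ := 1 - θ * δ' / 2 with hρ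
  have hθδ' : 0 ≤ θ * δ' := by positivity
  have hρ_lb : 7 / 8 ≤ ρ := by linarith
  have hρ_le_one : ρ ≤ 1 := by linarith
  have hρ3 : 1 / 2 ≤ ρ ^ 3 := by
    nlinarith [pow_le_pow_left₀ (by norm_num) hρ_lb 3]
  -- `ρ^5 - δρ^4 - (1-δ-δ')ρ^3 = ρ^3 (δ' - (1-ρ)(1+ρ-δ))` and `(1-ρ)(1+ρ-δ) ≤ 2(1-ρ) = θδ'`
  have hmain : (1 - θ) * δ' ≤ δ' - (1 - ρ) * (1 + ρ - δ) := by
    nlinarith [mul_nonneg hδ hθδ']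
  have hgap : ρ ^ 3 * ((1 - θ) * δ') ≤ ρ ^ 5 - δ * ρ ^ 4 - (1 - δ - δ') * ρ ^ 3 := by
    have : ρ ^ 5 - δ * ρ ^ 4 - (1 - δ - δ') * ρ ^ 3 = ρ ^ 3 * (δ' - (1 - ρ) * (1 + ρ - δ)) := by
      ring
    rw [this]
    gcongr
  have hsmall : δ'' * (ρ ^ 2 + ρ + 1) ≤ 3 * δ'' := by
    nlinarith [mul_le_mul hρ_le_one hρ_le_one (by linarith) zero_le_one]
  nlinarith

theorem stmt9_general
    (δ δ' δ'' : ℝ) (hδ : δ ∈ Set.Icc (0 : ℝ) 1) (hδ' : δ' ∈ Set.Icc (0 : ℝ) 1)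
    (hδ'' : δ'' ∈ Set.Icc (0 : ℝ) 1) (hδsum : δ + δ' ≤ 1)
    (b c d e f : ℕ → ℝ)
    (hbS : ∀ k : ℕ, b (k + 1) = b k * δ + c k)
    (hcS : ∀ k : ℕ, c (k + 1) = b k * (1 - δ - δ') + d k)
    (hdS : ∀ k : ℕ, d (k + 1) = b k * δ'' + e k)
    (heS : ∀ k : ℕ, e (k + 1) = b k * δ'' + f k)
    (hfS : ∀ k : ℕ, f (k + 1) = b k * δ'')
    (bstar θ : ℝ) (hbstar : 0 < bstar) (hθ : θ ∈ Set.Ioo (0 : ℝ) 1)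
    (ha : 4 * θ * δ' < 1)
    (hbb : 14 * δ'' ≤ (1 - θ) * δ')
    (hcc : ∀ k : ℕ, k ≤ 4 → b k ≤ bstar * (1 - 2 * θ * δ') ^ k) :
    ∀ k : ℕ, b k ≤ bstar * (1 - θ * δ' / 2) ^ k := by
  have hθδ' : 0 ≤ θ * δ' := mul_nonneg hθ.1.le hδ'.1
  have hcoeff : ∀ i, 0 ≤ ![δ'', δ'', δ'', 1 - δ - δ', δ] i := by
    intro i
    fin_cases i <;> simp [hδ.1, hδ''.1, sub_sub, hδsum]
  refine le_geometric_of_le_linear_recurrence _ hcoeff (fun k => ?_) hbstar.le (by linarith) ?_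
    fun k hk => ?_
  · simp [Fin.sum_univ_five, add_five_eq_of_recursions hbS hcS hdS heS hfS k, mul_comm]
  · simp [Fin.sum_univ_five]
    linear_combination char_ineq_of_decay_conditions hδ.1 hδ'.1 hδ''.1 hθ.1 ha hbb
  · calc b k ≤ bstar * (1 - 2 * θ * δ') ^ k := hcc k (by omega)
      _ ≤ bstar * (1 - θ * δ' / 2) ^ k := by gcongr <;> linarith

/-- Geometric decay lemma (Lemma 2.11). -/
theorem stmt9
    (β j : ℤ → ℝ) (hβ : ∀ n, 0 ≤ β n) (hj : ∀ n, 0 ≤ j n)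
    (δ δ' δ'' : ℝ) (hδ : δ ∈ Set.Icc (0 : ℝ) 1) (hδ' : δ' ∈ Set.Icc (0 : ℝ) 1)
    (hδ'' : δ'' ∈ Set.Icc (0 : ℝ) 1) (hδsum : δ + δ' ≤ 1)
    (hrec : ∀ n : ℤ,
      β (n + 1) ≤ j (n + 1) + δ * β n + (1 - δ - δ') * β (n - 1)
        + δ'' * (β (n - 2) + β (n - 3) + β (n - 4)))
    (b c d e f : ℕ → ℝ)
    (hb0 : b 0 = δ) (hc0 : c 0 = 1 - δ - δ')
    (hd0 : d 0 = δ'') (he0 : e 0 = δ'') (hf0 : f 0 = δ'')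
    (hbS : ∀ k : ℕ, b (k + 1) = b k * δ + c k)
    (hcS : ∀ k : ℕ, c (k + 1) = b k * (1 - δ - δ') + d k)
    (hdS : ∀ k : ℕ, d (k + 1) = b k * δ'' + e k)
    (heS : ∀ k : ℕ, e (k + 1) = b k * δ'' + f k)
    (hfS : ∀ k : ℕ, f (k + 1) = b k * δ'')
    (bstar θ : ℝ) (hbstar : 0 < bstar) (hθ : θ ∈ Set.Ioo (0 : ℝ) 1)
    (ha : 4 * θ * δ' < 1)
    (hbb : 14 * δ'' ≤ (1 - θ) * δ')
    (hcc : ∀ k : ℕ, k ≤ 4 → b k ≤ bstar * (1 - 2 * θ * δ') ^ k) :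
    ∀ k : ℕ, b k ≤ bstar * (1 - θ * δ' / 2) ^ k :=
  stmt9_general δ δ' δ'' hδ hδ' hδ'' hδsum b c d e f hbS hcS hdS heS hfS bstar θ hbstar hθ ha hbb
    hcc
end

section
/- (Expansion of the Bessel-ratio first-passage function; Lemma on R⁰.) Define K₀(x) := ∫₀^∞ e^{−x cosh t} dt for x > 0 and I₀(x) := (1/π)∫₀^π e^{x cos θ} dθ for x ≥ 0, and for ν > 0 and a, b > 0 set R⁰_ν(a,b) := K₀(a√(2ν))/K₀(b√(2ν)) if a ≥ b, and R⁰_ν(a,b) := I₀(a√(2ν))/I₀(b√(2ν)) if a ≤ b. Then for every M > 0 there exist C(M) > 0 and ν₀(M) > 0 such that for all ν ∈ (0,ν₀] and all a, b with 0 < a, b ≤ M: | R⁰_ν(a,b) − 1 + log⁻(b/a)/log(1/√(2ν)) | ≤ C(M) [ (a∨b)² · 2ν · log(1/((a∨b)√(2ν))) + (|log b|·1_{a≥b} + 1)(log⁻(b/a) + 1)/(log √(2ν))² ], where log⁻(x) := −log(min(x,1)) and a∨b := max(a,b). -/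
open MeasureTheory

noncomputable section

/-- The Macdonald function `K₀`. -/
def K0 (x : ℝ) : ℝ := ∫ t in Set.Ioi (0 : ℝ), Real.exp (-x * Real.cosh t)

/-- The modified Bessel function `I₀`. -/
def I0 (x : ℝ) : ℝ := (1 / Real.pi) * ∫ θ in (0 : ℝ)..Real.pi, Real.exp (x * Real.cos θ)

/-- The Bessel-ratio first-passage function `R⁰_ν(a,b)`. -/
def R0 (ν a b : ℝ) : ℝ :=
  if b ≤ a then K0 (a * Real.sqrt (2 * ν)) / K0 (b * Real.sqrt (2 * ν))
  else I0 (a * Real.sqrt (2 * ν)) / I0 (b * Real.sqrt (2 * ν))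

/-- `log⁻(x) = -log (min x 1)`. -/
def logMinus (x : ℝ) : ℝ := -Real.log (min x 1)

end

/-! For small `x`, `K₀(x) = log (2/x) - γ + O(x)`: replacing `e^{-x cosh t}` by
`e^{-(x/2) eᵗ}` costs `O(x)`, and the substitution `u = (x/2) eᵗ` turns the latter integral into
the exponential integral `E₁(x/2) = -log (x/2) - γ + O(x)`. With `ℓ = log (1/√(2ν))`, numerator
and denominator of the `K₀`-ratio are `ℓ - log a + O(1)` and `ℓ - log b + O(1)`, so the ratio is
`1 - log (a/b)/ℓ + O((|log b| + 1)(log (a/b) + 1)/ℓ²)`; the `O(√(2ν))` errors of the expansions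
are absorbed because `√(2ν) ℓ ≤ 1`. For `a < b`, `I₀(x) = 1 + O(x²)` makes the `I₀`-ratio
`1 + O(b² ν)`. -/

open Set Real

noncomputable def expIntegralE1 (y : ℝ) : ℝ := ∫ u in Ioi y, exp (-u) / u

-- This is `-γ`, minus the Euler–Mascheroni constant.
noncomputable def expIntegralE1Const : ℝ :=
  (∫ u in (0 : ℝ)..1, (exp (-u) - 1) / u) + expIntegralE1 1

lemma integrableOn_exp_neg_div_self {y : ℝ} (hy : 0 < y) :
    IntegrableOn (fun u => exp (-u) / u) (Ioi y) := by
  refine ((integrableOn_exp_neg_Ioi y).const_mul y⁻¹).mono' ?_ ?_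
  · exact ((measurable_exp.comp measurable_neg).div measurable_id).aestronglyMeasurable
  · filter_upwards [ae_restrict_mem measurableSet_Ioi] with u (hu : y < u)
    have hu0 : 0 < u := hy.trans hu
    rw [norm_of_nonneg (by positivity), div_eq_inv_mul]
    exact mul_le_mul_of_nonneg_right (inv_anti₀ hy hu.le) (exp_pos _).le

lemma abs_exp_neg_sub_one_div_le_one {u : ℝ} (hu : 0 ≤ u) : |(exp (-u) - 1) / u| ≤ 1 := by
  rcases hu.eq_or_lt with rfl | hu
  · simp
  rw [abs_div, abs_of_pos hu, div_le_one hu, abs_sub_comm, abs_of_nonneg]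
  · linarith [add_one_le_exp (-u)]
  · linarith [exp_le_one_iff.2 (neg_nonpos.2 hu.le)]

lemma intervalIntegrable_exp_neg_sub_one_div {a b : ℝ} (ha : 0 ≤ a) (hb : 0 ≤ b) :
    IntervalIntegrable (fun u => (exp (-u) - 1) / u) volume a b := by
  refine (intervalIntegrable_const (c := (1 : ℝ))).mono_fun ?_ ?_
  · exact (((measurable_exp.comp measurable_neg).sub measurable_const).div
      measurable_id).aestronglyMeasurable
  · filter_upwards [ae_restrict_mem measurableSet_uIoc] with u hu
    rw [norm_one]
    exact abs_exp_neg_sub_one_div_le_one ((le_min ha hb).trans hu.1.le)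

lemma expIntegralE1_eq_intervalIntegral_add {y : ℝ} (hy : 0 < y) (hy1 : y ≤ 1) :
    expIntegralE1 y = (∫ u in y..1, exp (-u) / u) + expIntegralE1 1 := by
  rw [intervalIntegral.integral_of_le hy1, expIntegralE1, expIntegralE1,
    ← setIntegral_union (Ioc_disjoint_Ioi le_rfl) measurableSet_Ioi
      ((integrableOn_exp_neg_div_self hy).mono_set Ioc_subset_Ioi_self)
      (integrableOn_exp_neg_div_self one_pos),
    Ioc_union_Ioi_eq_Ioi hy1]

lemma abs_expIntegralE1_add_log_sub_le {y : ℝ} (hy : 0 < y) (hy1 : y ≤ 1) :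
    |expIntegralE1 y + log y - expIntegralE1Const| ≤ y := by
  have hpos : ∀ u ∈ uIcc y 1, 0 < u := fun u hu => hy.trans_le (by simpa [hy1] using hu.1)
  have hsplit : ∫ u in y..1, exp (-u) / u
      = (∫ u in y..1, u⁻¹) + ∫ u in y..1, (exp (-u) - 1) / u := by
    rw [← intervalIntegral.integral_add
      ((continuousOn_inv₀.mono fun u hu => (hpos u hu).ne').intervalIntegrable)
      (intervalIntegrable_exp_neg_sub_one_div hy.le zero_le_one)]
    refine intervalIntegral.integral_congr fun u hu => ?_
    field_simp [(hpos u hu).ne']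
    ring
  have hinv : ∫ u in y..1, u⁻¹ = -log y := by
    rw [integral_inv_of_pos hy one_pos, one_div, log_inv]
  have hadd : (∫ u in (0 : ℝ)..y, (exp (-u) - 1) / u) + ∫ u in y..1, (exp (-u) - 1) / u
      = ∫ u in (0 : ℝ)..1, (exp (-u) - 1) / u :=
    intervalIntegral.integral_add_adjacent_intervals
      (intervalIntegrable_exp_neg_sub_one_div le_rfl hy.le)
      (intervalIntegrable_exp_neg_sub_one_div hy.le zero_le_one)
  have heq : expIntegralE1 y + log y - expIntegralE1Const
      = -∫ u in (0 : ℝ)..y, (exp (-u) - 1) / u := by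
    rw [expIntegralE1_eq_intervalIntegral_add hy hy1, hsplit, hinv, expIntegralE1Const, ← hadd]
    ring
  rw [heq, abs_neg, ← norm_eq_abs]
  calc ‖∫ u in (0 : ℝ)..y, (exp (-u) - 1) / u‖ ≤ 1 * |y - 0| :=
        intervalIntegral.norm_integral_le_of_norm_le_const fun u hu =>
          abs_exp_neg_sub_one_div_le_one ((le_min le_rfl hy.le).trans hu.1.le)
    _ = y := by rw [one_mul, sub_zero, abs_of_pos hy]

lemma image_const_mul_exp_Ioi_zero {c : ℝ} (hc : 0 < c) :
    (fun t => c * exp t) '' Ioi 0 = Ioi c := by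
  rw [← image_image (c * ·) exp, image_exp_Ioi, exp_zero, image_mul_left_Ioi hc, mul_one]

lemma abs_mul_exp_smul_exp_neg_div {c t : ℝ} (hc : 0 < c) :
    |c * exp t| • (exp (-(c * exp t)) / (c * exp t)) = exp (-(c * exp t)) := by
  have : 0 < c * exp t := by positivity
  rw [abs_of_pos this, smul_eq_mul, mul_div_cancel₀ _ this.ne']

lemma integrableOn_exp_neg_mul_exp {c : ℝ} (hc : 0 < c) :
    IntegrableOn (fun t => exp (-(c * exp t))) (Ioi 0) := by
  have h := (integrableOn_image_iff_integrableOn_abs_deriv_smul (measurableSet_Ioi (a := 0))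
    (fun t _ => ((hasDerivAt_exp t).const_mul c).hasDerivWithinAt)
    ((mul_right_injective₀ hc.ne').comp exp_injective).injOn (fun u => exp (-u) / u)).1
  rw [image_const_mul_exp_Ioi_zero hc] at h
  simpa only [abs_mul_exp_smul_exp_neg_div hc] using h (integrableOn_exp_neg_div_self hc)

lemma integral_exp_neg_mul_exp {c : ℝ} (hc : 0 < c) :
    ∫ t in Ioi 0, exp (-(c * exp t)) = expIntegralE1 c := by
  have h := integral_image_eq_integral_abs_deriv_smul (measurableSet_Ioi (a := 0))
    (fun t _ => ((hasDerivAt_exp t).const_mul c).hasDerivWithinAt)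
    ((mul_right_injective₀ hc.ne').comp exp_injective).injOn (fun u => exp (-u) / u)
  rw [image_const_mul_exp_Ioi_zero hc] at h
  simp only [abs_mul_exp_smul_exp_neg_div hc] at h
  rw [expIntegralE1, h]

-- `x cosh t = (x/2) eᵗ + (x/2) e⁻ᵗ`, and dropping the second term costs `O(x e⁻ᵗ)`.
lemma exp_neg_half_mul_exp_sub_exp_neg_mul_cosh_mem_Icc {x t : ℝ} (hx : 0 ≤ x) :
    exp (-(x / 2 * exp t)) - exp (-x * cosh t) ∈ Icc 0 (x / 2 * exp (-t)) := by
  have hsplit : exp (-x * cosh t) = exp (-(x / 2 * exp t)) * exp (-(x / 2 * exp (-t))) := by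
    rw [← exp_add, cosh_eq]; ring_nf
  have hv : 0 ≤ x / 2 * exp (-t) := by positivity
  have hlow : 1 - x / 2 * exp (-t) ≤ exp (-(x / 2 * exp (-t))) := by
    linarith [add_one_le_exp (-(x / 2 * exp (-t)))]
  have hup : exp (-(x / 2 * exp (-t))) ≤ 1 := exp_le_one_iff.2 (neg_nonpos.2 hv)
  have hE : exp (-(x / 2 * exp t)) ≤ 1 := exp_le_one_iff.2 (neg_nonpos.2 (by positivity))
  have hE0 := exp_pos (-(x / 2 * exp t))
  rw [hsplit]
  constructor <;> nlinarith

lemma integrableOn_exp_neg_mul_cosh {x : ℝ} (hx : 0 < x) :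
    IntegrableOn (fun t => exp (-x * cosh t)) (Ioi 0) := by
  refine (integrableOn_exp_neg_mul_exp (half_pos hx)).mono' (by fun_prop) ?_
  filter_upwards with t
  rw [norm_of_nonneg (exp_pos _).le]
  linarith [(exp_neg_half_mul_exp_sub_exp_neg_mul_cosh_mem_Icc (t := t) hx.le).1]

lemma abs_K0_sub_expIntegralE1_le {x : ℝ} (hx : 0 < x) :
    |K0 x - expIntegralE1 (x / 2)| ≤ x / 2 := by
  rw [K0, ← integral_exp_neg_mul_exp (half_pos hx), abs_sub_comm,
    ← integral_sub (integrableOn_exp_neg_mul_exp (half_pos hx))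
      (integrableOn_exp_neg_mul_cosh hx),
    ← norm_eq_abs]
  calc ‖∫ t in Ioi 0, (exp (-(x / 2 * exp t)) - exp (-x * cosh t))‖
      ≤ ∫ t in Ioi 0, x / 2 * exp (-t) := by
        refine norm_integral_le_of_norm_le ((integrableOn_exp_neg_Ioi 0).const_mul _) ?_
        filter_upwards with t
        obtain ⟨h0, h1⟩ := exp_neg_half_mul_exp_sub_exp_neg_mul_cosh_mem_Icc (t := t) hx.le
        rwa [norm_of_nonneg h0]
    _ = x / 2 := by rw [integral_const_mul, integral_exp_neg_Ioi_zero, mul_one]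

noncomputable def K0Const : ℝ := log 2 + expIntegralE1Const

lemma abs_K0_sub_log_le {x : ℝ} (hx : 0 < x) (hx1 : x ≤ 1) :
    |K0 x - log (1 / x) - K0Const| ≤ x := by
  have hlog : log (1 / x) + log 2 = -log (x / 2) := by
    rw [log_div hx.ne' two_ne_zero, one_div, log_inv]; ring
  have hE := abs_expIntegralE1_add_log_sub_le (half_pos hx) (by linarith)
  calc |K0 x - log (1 / x) - K0Const|
      = |(K0 x - expIntegralE1 (x / 2))
          + (expIntegralE1 (x / 2) + log (x / 2) - expIntegralE1Const)| := by
        rw [K0Const]; congr 1; linarith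
    _ ≤ x / 2 + x / 2 :=
        (abs_add_le _ _).trans (add_le_add (abs_K0_sub_expIntegralE1_le hx) hE)
    _ = x := add_halves x

lemma abs_I0_sub_one_le {x : ℝ} (hx : |x| ≤ 1) : |I0 x - 1| ≤ x ^ 2 := by
  have hcont : Continuous fun θ => exp (x * cos θ) - 1 - x * cos θ := by fun_prop
  have hlin : ∫ θ in (0 : ℝ)..π, (1 + x * cos θ) = π := by
    rw [intervalIntegral.integral_add (f := fun _ => 1) (g := fun θ => x * cos θ)
      intervalIntegrable_const
      ((by fun_prop : Continuous fun θ => x * cos θ).intervalIntegrable _ _),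
      intervalIntegral.integral_const, intervalIntegral.integral_const_mul, integral_cos]
    simp
  have heq : I0 x - 1 = π⁻¹ * ∫ θ in (0 : ℝ)..π, (exp (x * cos θ) - 1 - x * cos θ) := by
    have hsplit : ∫ θ in (0 : ℝ)..π, exp (x * cos θ)
        = (∫ θ in (0 : ℝ)..π, (exp (x * cos θ) - 1 - x * cos θ))
          + ∫ θ in (0 : ℝ)..π, (1 + x * cos θ) := by
      rw [← intervalIntegral.integral_add (hcont.intervalIntegrable _ _)
        ((by fun_prop : Continuous fun θ => 1 + x * cos θ).intervalIntegrable _ _)]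
      congr 1 with θ
      ring
    rw [I0, hsplit, hlin]
    field_simp
    ring
  have hbound :
      ‖∫ θ in (0 : ℝ)..π, (exp (x * cos θ) - 1 - x * cos θ)‖ ≤ x ^ 2 * |π - 0| := by
    refine intervalIntegral.norm_integral_le_of_norm_le_const fun θ _ => ?_
    have hxc : |x * cos θ| ≤ 1 := by
      rw [abs_mul]; nlinarith [abs_cos_le_one θ, abs_nonneg x, abs_nonneg (cos θ)]
    calc ‖exp (x * cos θ) - 1 - x * cos θ‖ ≤ (x * cos θ) ^ 2 := abs_exp_sub_one_sub_id_le hxc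
      _ ≤ x ^ 2 := by rw [mul_pow]; nlinarith [cos_sq_le_one θ, sq_nonneg x]
  rw [heq, abs_mul, abs_inv, abs_of_pos pi_pos, ← norm_eq_abs, inv_mul_le_iff₀ pi_pos]
  rw [sub_zero, abs_of_pos pi_pos] at hbound
  linarith

lemma abs_I0_div_sub_one_le {x y : ℝ} (hxy : |x| ≤ |y|) (hy : |y| ≤ 1 / 3) :
    |I0 x / I0 y - 1| ≤ 3 * y ^ 2 := by
  have hy2 : y ^ 2 ≤ 1 / 9 := by nlinarith [sq_abs y, abs_nonneg y]
  have hx := abs_I0_sub_one_le (hxy.trans (by linarith))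
  have hy' := abs_I0_sub_one_le (hy.trans (by norm_num))
  have hxy2 : x ^ 2 ≤ y ^ 2 := sq_le_sq.2 hxy
  have hIy : 8 / 9 ≤ I0 y := by linarith [(abs_le.1 hy').1]
  have hIy0 : 0 < I0 y := by linarith
  rw [div_sub_one hIy0.ne', abs_div, abs_of_pos hIy0, div_le_iff₀ hIy0]
  calc |I0 x - I0 y| = |(I0 x - 1) - (I0 y - 1)| := by ring_nf
    _ ≤ |I0 x - 1| + |I0 y - 1| := abs_sub _ _
    _ ≤ 3 * y ^ 2 * I0 y := by nlinarith

lemma abs_div_sub_one_add_div_le {N D ℓ l e : ℝ} (hℓ : 0 < ℓ) (hD : ℓ / 2 ≤ D)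
    (hND : N - D = -l + e) :
    |N / D - 1 + l / ℓ| ≤ 2 * (|l| * |D - ℓ| + ℓ * |e|) / ℓ ^ 2 := by
  have hD0 : 0 < D := by linarith
  have heq : N / D - 1 + l / ℓ = (l * (D - ℓ) + ℓ * e) / (D * ℓ) := by
    rw [eq_div_iff (by positivity)]
    field_simp
    linear_combination ℓ * hND
  have hnum : |l * (D - ℓ) + ℓ * e| ≤ |l| * |D - ℓ| + ℓ * |e| := by
    calc _ ≤ |l * (D - ℓ)| + |ℓ * e| := abs_add_le _ _
      _ = _ := by rw [abs_mul, abs_mul, abs_of_pos hℓ]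
  rw [heq, abs_div, abs_of_pos (mul_pos hD0 hℓ)]
  calc _ ≤ (|l| * |D - ℓ| + ℓ * |e|) / (ℓ ^ 2 / 2) :=
        div_le_div₀ (by positivity) hnum (by positivity) (by nlinarith)
    _ = _ := by field_simp

lemma mul_log_one_div_le_one {s : ℝ} (hs : 0 < s) : s * log (1 / s) ≤ 1 := by
  have h := log_le_sub_one_of_pos (one_div_pos.2 hs)
  calc s * log (1 / s) ≤ s * (1 / s - 1) := mul_le_mul_of_nonneg_left h hs.le
    _ ≤ 1 := by rw [mul_sub, mul_one_div_cancel hs.ne']; linarith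

lemma abs_K0_ratio_sub_le {M s a b : ℝ} (hs : 0 < s) (hMs : M * s ≤ 1)
    (hℓ : 2 * (|log M| + |K0Const| + 1) ≤ log (1 / s))
    (hb : 0 < b) (hba : b ≤ a) (haM : a ≤ M) :
    |K0 (a * s) / K0 (b * s) - 1 + log (a / b) / log (1 / s)|
      ≤ 2 * (|K0Const| + 2 * M + 1) * ((|log b| + 1) * (log (a / b) + 1)) / log (1 / s) ^ 2 := by
  set ℓ := log (1 / s)
  have ha : 0 < a := hb.trans_le hba
  have hM : 0 ≤ M := by linarith
  have hℓ0 : 0 < ℓ := by linarith [abs_nonneg (log M), abs_nonneg K0Const]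
  have hl : 0 ≤ log (a / b) := log_nonneg ((one_le_div hb).2 hba)
  have has : a * s ≤ M * s := mul_le_mul_of_nonneg_right haM hs.le
  have hbs : b * s ≤ M * s := mul_le_mul_of_nonneg_right (hba.trans haM) hs.le
  have hlog : ∀ z, 0 < z → log (1 / (z * s)) = ℓ - log z := fun z hz => by
    simp only [ℓ, one_div, log_inv, log_mul hz.ne' hs.ne']
    ring
  have hea := abs_K0_sub_log_le (mul_pos ha hs) (has.trans hMs)
  have heb := abs_K0_sub_log_le (mul_pos hb hs) (hbs.trans hMs)
  rw [hlog a ha] at hea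
  rw [hlog b hb] at heb
  set ea := K0 (a * s) - (ℓ - log a) - K0Const
  set eb := K0 (b * s) - (ℓ - log b) - K0Const
  have hDℓ : |K0 (b * s) - ℓ| ≤ |log b| + |K0Const| + 1 := by
    rw [abs_le]
    constructor <;> linarith [abs_le.1 heb, le_abs_self (log b), neg_abs_le (log b),
      le_abs_self K0Const, neg_abs_le K0Const]
  have hD : ℓ / 2 ≤ K0 (b * s) := by
    have : log b ≤ |log M| := (log_le_log hb (hba.trans haM)).trans (le_abs_self _)
    linarith [abs_le.1 heb, neg_abs_le K0Const]
  have hND : K0 (a * s) - K0 (b * s) = -log (a / b) + (ea - eb) := by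
    simp only [ea, eb, log_div ha.ne' hb.ne']
    ring
  have he : ℓ * |ea - eb| ≤ 2 * M :=
    calc ℓ * |ea - eb| ≤ ℓ * (2 * M * s) := by
          gcongr; exact (abs_sub _ _).trans (by linarith)
      _ = 2 * M * (s * ℓ) := by ring
      _ ≤ 2 * M := mul_le_of_le_one_right (by positivity) (mul_log_one_div_le_one hs)
  refine (abs_div_sub_one_add_div_le hℓ0 hD hND).trans ?_
  rw [abs_of_nonneg hl]
  gcongr ?_ / _
  calc _ ≤ 2 * (log (a / b) * (|log b| + |K0Const| + 1) + 2 * M) := by gcongr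
    _ ≤ _ := by
        nlinarith [mul_nonneg (abs_nonneg K0Const) (mul_nonneg (abs_nonneg (log b)) hl),
          mul_nonneg hM (mul_nonneg (abs_nonneg (log b)) hl), mul_nonneg hM hl,
          mul_nonneg hM (abs_nonneg (log b)), mul_nonneg (abs_nonneg K0Const) hl,
          mul_nonneg (abs_nonneg K0Const) (abs_nonneg (log b)), mul_nonneg (abs_nonneg (log b)) hl,
          abs_nonneg K0Const, abs_nonneg (log b)]

lemma abs_I0_ratio_sub_le {s a b : ℝ} (hs : 0 < s) (ha : 0 < a) (hab : a ≤ b)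
    (hbs : b * s ≤ 1 / 3) :
    |I0 (a * s) / I0 (b * s) - 1| ≤ 3 * (b ^ 2 * s ^ 2 * log (1 / (b * s))) := by
  have hbs0 : 0 < b * s := mul_pos (ha.trans_le hab) hs
  have hlog : 1 ≤ log (1 / (b * s)) := by
    have h3 : 3 ≤ 1 / (b * s) := by rw [le_div_iff₀ hbs0]; linarith
    rw [le_log_iff_exp_le (by positivity)]
    linarith [exp_one_lt_d9]
  calc |I0 (a * s) / I0 (b * s) - 1| ≤ 3 * (b * s) ^ 2 := by
        refine abs_I0_div_sub_one_le ?_ (by rwa [abs_of_pos hbs0])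
        rw [abs_of_pos hbs0, abs_of_pos (mul_pos ha hs)]
        exact mul_le_mul_of_nonneg_right hab hs.le
    _ ≤ 3 * ((b * s) ^ 2 * log (1 / (b * s))) := by
        gcongr; exact le_mul_of_one_le_right (by positivity) hlog
    _ = _ := by ring

lemma abs_R0_sub_le {M ν a b : ℝ} (hν : 0 < ν) (hMs : M * √(2 * ν) ≤ 1 / 3)
    (hℓ : 2 * (|log M| + |K0Const| + 1) ≤ log (1 / √(2 * ν)))
    (ha : 0 < a) (haM : a ≤ M) (hb : 0 < b) (hbM : b ≤ M) :
    |R0 ν a b - 1 + logMinus (b / a) / log (1 / √(2 * ν))| ≤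
      2 * (|K0Const| + 2 * M + 2) * (max a b ^ 2 * (2 * ν) * log (1 / (max a b * √(2 * ν)))
        + (|log b| * (if b ≤ a then (1 : ℝ) else 0) + 1) * (logMinus (b / a) + 1)
          / log (√(2 * ν)) ^ 2) := by
  set s := √(2 * ν)
  have hs : 0 < s := sqrt_pos.2 (by linarith)
  have h2ν : 2 * ν = s ^ 2 := (sq_sqrt (by linarith)).symm
  have hlogsq : log s ^ 2 = log (1 / s) ^ 2 := by rw [one_div, log_inv, neg_sq]
  have hM : 0 < M := ha.trans_le haM
  rw [h2ν, hlogsq]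
  by_cases hba : b ≤ a
  · have hlm : logMinus (b / a) = log (a / b) := by
      rw [logMinus, min_eq_left ((div_le_one ha).2 hba), ← log_inv, inv_div]
    have has : a * s ≤ 1 := by nlinarith
    rw [R0, if_pos hba, if_pos hba, max_eq_left hba, hlm, mul_one]
    calc _ ≤ 2 * (|K0Const| + 2 * M + 1) * ((|log b| + 1) * (log (a / b) + 1))
            / log (1 / s) ^ 2 :=
          abs_K0_ratio_sub_le hs (by linarith) hℓ hb hba haM
      _ ≤ _ := by
          have hT : 0 ≤ a ^ 2 * s ^ 2 * log (1 / (a * s)) :=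
            mul_nonneg (by positivity) (log_nonneg (one_le_one_div (by positivity) has))
          have hl : 0 ≤ log (a / b) := log_nonneg ((one_le_div hb).2 hba)
          rw [mul_div_assoc]
          exact mul_le_mul (by linarith) (le_add_of_nonneg_left hT) (by positivity) (by positivity)
  · have hab := not_le.1 hba
    have hlm : logMinus (b / a) = 0 := by
      rw [logMinus, min_eq_right ((one_le_div ha).2 hab.le), log_one, neg_zero]
    rw [R0, if_neg hba, if_neg hba, max_eq_right hab.le, hlm, zero_div, add_zero]
    have hbs : b * s ≤ 1 / 3 := by nlinarith
    have hT : 0 ≤ b ^ 2 * s ^ 2 * log (1 / (b * s)) :=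
      mul_nonneg (by positivity) (log_nonneg (one_le_one_div (by positivity) (by linarith)))
    calc _ ≤ 3 * (b ^ 2 * s ^ 2 * log (1 / (b * s))) := abs_I0_ratio_sub_le hs ha hab.le hbs
      _ ≤ _ := mul_le_mul (by linarith [abs_nonneg K0Const])
          (le_add_of_nonneg_right (by positivity)) hT (by positivity)

/-- Expansion of the Bessel-ratio first-passage function (Lemma 3.3 (3°)). -/
theorem stmt11 :
    ∀ M : ℝ, 0 < M → ∃ C > (0 : ℝ), ∃ ν₀ > (0 : ℝ),
      ∀ ν ∈ Set.Ioc (0 : ℝ) ν₀, ∀ a b : ℝ,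
        0 < a → a ≤ M → 0 < b → b ≤ M →
          |R0 ν a b - 1 + logMinus (b / a) / Real.log (1 / Real.sqrt (2 * ν))| ≤
            C * ((max a b) ^ 2 * (2 * ν) *
                Real.log (1 / ((max a b) * Real.sqrt (2 * ν)))
              + (|Real.log b| * (if b ≤ a then (1 : ℝ) else 0) + 1) *
                  (logMinus (b / a) + 1) / (Real.log (Real.sqrt (2 * ν))) ^ 2) := by
  intro M hM
  set A := 2 * (|log M| + |K0Const| + 1)
  set ε := min (1 / (3 * M)) (exp (-A))
  have hε : 0 < ε := lt_min (by positivity) (exp_pos _)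
  refine ⟨2 * (|K0Const| + 2 * M + 2), by positivity, ε ^ 2 / 2, by positivity, ?_⟩
  rintro ν ⟨hν, hνε⟩ a b ha haM hb hbM
  have hs : 0 < √(2 * ν) := sqrt_pos.2 (by linarith)
  have hsε : √(2 * ν) ≤ ε := (sqrt_le_left hε.le).2 (by linarith)
  refine abs_R0_sub_le hν ?_ ?_ ha haM hb hbM
  · have h := hsε.trans (min_le_left _ _)
    rw [le_div_iff₀ (by positivity)] at h
    linarith
  · calc A = -log (exp (-A)) := by rw [log_exp, neg_neg]
      _ ≤ -log √(2 * ν) := neg_le_neg (log_le_log hs (hsε.trans (min_le_right _ _)))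
      _ = log (1 / √(2 * ν)) := by rw [one_div, log_inv]
end
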